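/- arXiv:1712.04894 — 3 statements merged into one kernel-verified Lean document; each statement's English description precedes it below -/
import Mathlib

section
/- Let α be such that M(α) : ℓ²(ℕ+) → ℓ²(ℕ+) is bounded, and for 0 < r < 1 let α_r = D_r α, i.e. α_r(n) = r^{Ω'(n)} α(n). Then M(α_r) = D_r M(α) D_r as operators; consequently M(α_r) is compact and ‖M(α_r)‖ ≤ ‖M(α)‖. -/
open scoped ComplexConjugate

noncomputable section

abbrev H := lp (fun _ : ℕ+ => ℂ) 2

/-- Ω'(n) = ∑_j j·κ_j where κ_j is the exponent of the j-th prime in n. -/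
def Om (n : ℕ+) : ℕ := (n : ℕ).factorization.sum fun p k => p.primeCounting * k

/-- `T` is the multiplicative Hankel operator with matrix `{α(nm)}`:
the matrix entry `⟨T e_n, e_m⟩` equals `α (n*m)`. -/
def IsHankel (T : H →L[ℂ] H) (α : ℕ+ → ℂ) : Prop :=
  ∀ n m : ℕ+, (T (lp.single 2 n 1) : ℕ+ → ℂ) m = α (n * m)

/-!
Since `Ω'` is completely additive, `D_r M(α) D_r` has matrix entries
`r^{Ω'(m)} α(nm) r^{Ω'(n)} = α_r(nm)`, and two bounded operators on `ℓ²` agreeing on the basis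
are equal. The diagonal entries `r^{Ω'(n)}` are at most `1` and tend to `0` along the cofinite
filter: a prime `p` dividing `n` forces `π(p) ≤ Ω'(n)`, so a bound on `Ω'(n)` bounds both the
prime factors of `n` and their number. Hence `D_r` is a contraction and a norm limit of its
finite-rank truncations, so `D_r M(α) D_r` is compact of norm at most `‖M(α)‖`.
-/
open Filter Topology
open scoped lp ENNReal

lemma Om_mul (n m : ℕ+) : Om (n * m) = Om n + Om m := by
  unfold Om
  rw [PNat.mul_coe, Nat.factorization_mul n.ne_zero m.ne_zero]
  exact Finsupp.sum_add_index' (fun _ => mul_zero _) (fun _ _ _ => mul_add _ _ _)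

lemma primeCounting_le_Om {n : ℕ+} {p : ℕ} (hp : p ∈ (n : ℕ).primeFactors) :
    p.primeCounting ≤ Om n :=
  have hp : p ∈ (n : ℕ).factorization.support := (Nat.support_factorization _).symm ▸ hp
  calc p.primeCounting
      ≤ p.primeCounting * (n : ℕ).factorization p :=
        Nat.le_mul_of_pos_right _ (Nat.pos_of_ne_zero (Finsupp.mem_support_iff.1 hp))
    _ ≤ Om n := Finset.single_le_sum (f := fun p => p.primeCounting * (n : ℕ).factorization p)
        (fun _ _ => Nat.zero_le _) hp

lemma sum_factorization_le_Om (n : ℕ+) : (n : ℕ).factorization.sum (fun _ k => k) ≤ Om n := by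
  refine Finset.sum_le_sum fun p hp => Nat.le_mul_of_pos_left _ (Nat.pos_of_ne_zero ?_)
  rw [Ne, Nat.primeCounting_eq_zero_iff, not_le]
  exact (Nat.prime_of_mem_primeFactors (Nat.support_factorization _ ▸ hp)).one_lt

lemma le_pow_of_forall_primeFactors_le {n N : ℕ} (hn : n ≠ 0)
    (h : ∀ p ∈ n.primeFactors, p ≤ N) : n ≤ N ^ n.factorization.sum (fun _ k => k) :=
  calc n = n.factorization.prod (· ^ ·) := (Nat.prod_factorization_pow_eq_self hn).symm
    _ ≤ n.factorization.prod fun _ k => N ^ k :=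
        Finset.prod_le_prod' fun p hp => Nat.pow_le_pow_left (h p (Nat.support_factorization n ▸ hp)) _
    _ = N ^ n.factorization.sum (fun _ k => k) := Finset.prod_pow_eq_pow_sum _ _ _

lemma tendsto_Om_cofinite_atTop : Tendsto Om cofinite atTop := by
  refine tendsto_atTop.2 fun M => ?_
  obtain ⟨N, hN⟩ := eventually_atTop.1 (Nat.tendsto_primeCounting.eventually_gt_atTop M)
  refine ((Set.finite_Iic ((N + 1) ^ M)).preimage PNat.coe_injective.injOn).subset fun n hn => ?_
  have hn : Om n ≤ M := le_of_lt (not_le.1 hn)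
  have hp : ∀ p ∈ (n : ℕ).primeFactors, p ≤ N + 1 := fun p hp => by
    by_contra! hNp
    exact (hN p (by omega)).not_ge ((primeCounting_le_Om hp).trans hn)
  exact (le_pow_of_forall_primeFactors_le n.ne_zero hp).trans
    (Nat.pow_le_pow_right N.succ_pos ((sum_factorization_le_Om n).trans hn))

lemma lp.norm_le_mul_of_forall_norm_le {ι : Type*} {E F : ι → Type*}
    [∀ i, NormedAddCommGroup (E i)] [∀ i, NormedAddCommGroup (F i)] {p : ℝ≥0∞} [Fact (1 ≤ p)]
    {x : lp E p} {y : lp F p} {c : ℝ} (hc : 0 ≤ c) (h : ∀ i, ‖x i‖ ≤ c * ‖y i‖) :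
    ‖x‖ ≤ c * ‖y‖ :=
  calc ‖x‖ ≤ ‖c • lp.toNorm y‖ :=
        lp.norm_mono (zero_lt_one.trans_le Fact.out).ne' fun i => by
          simpa [abs_of_nonneg hc] using h i
    _ = c * ‖y‖ := by rw [norm_smul, Real.norm_of_nonneg hc, lp.norm_toNorm]

section Diagonal

variable {ι 𝕜 : Type*} [NontriviallyNormedField 𝕜] {p : ℝ≥0∞} [Fact (1 ≤ p)]

lemma lp.ext_single_one [DecidableEq ι] {E : Type*} [AddCommMonoid E] [Module 𝕜 E]
    [TopologicalSpace E] [T2Space E] (hp : p ≠ ∞) {S S' : ℓ^p(ι, 𝕜) →L[𝕜] E}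
    (h : ∀ i, S (lp.single p i 1) = S' (lp.single p i 1)) : S = S' :=
  lp.ext_continuousLinearMap hp fun i => ContinuousLinearMap.ext_ring (h i)

@[simp]
lemma lp.evalCLM_apply (i : ι) (a : ℓ^p(ι, 𝕜)) : lp.evalCLM 𝕜 (fun _ : ι => 𝕜) p i a = a i := rfl

variable {D : ℓ^p(ι, 𝕜) →L[𝕜] ℓ^p(ι, 𝕜)} {d : ι → 𝕜}

lemma apply_single_of_diagonal [DecidableEq ι] (hD : ∀ a i, D a i = d i * a i) (i : ι) (x : 𝕜) :
    D (lp.single p i x) = d i • lp.single p i x := by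
  ext j
  rw [hD, lp.coeFn_smul, Pi.smul_apply, smul_eq_mul]
  rcases eq_or_ne j i with rfl | hji
  · rfl
  · rw [lp.single_apply_ne (E := fun _ : ι => 𝕜) p i x hji, mul_zero, mul_zero]

lemma opNorm_le_of_diagonal (hD : ∀ a i, D a i = d i * a i) {c : ℝ} (hc : 0 ≤ c)
    (hd : ∀ i, ‖d i‖ ≤ c) : ‖D‖ ≤ c :=
  D.opNorm_le_bound hc fun a => lp.norm_le_mul_of_forall_norm_le hc fun i => by
    rw [hD, norm_mul]
    exact mul_le_mul_of_nonneg_right (hd i) (norm_nonneg _)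

variable (p) in
def diagonalTrunc [DecidableEq ι] (d : ι → 𝕜) (s : Finset ι) : ℓ^p(ι, 𝕜) →L[𝕜] ℓ^p(ι, 𝕜) :=
  ∑ i ∈ s, d i • (lp.singleContinuousLinearMap 𝕜 _ p i ∘L lp.evalCLM 𝕜 _ p i)

lemma diagonalTrunc_apply [DecidableEq ι] (s : Finset ι) (a : ℓ^p(ι, 𝕜)) (i : ι) :
    diagonalTrunc p d s a i = (s : Set ι).indicator d i * a i := by
  simp only [diagonalTrunc, FunLike.coe_sum, Finset.sum_apply, lp.coeFn_sum]
  simp [Pi.single_apply, Set.indicator_apply]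

lemma isCompactOperator_diagonalTrunc [ProperSpace 𝕜] [DecidableEq ι] (s : Finset ι) :
    IsCompactOperator (diagonalTrunc p d s) :=
  (compactOperator (RingHom.id 𝕜) _ _).sum_mem fun i _ => Submodule.smul_mem _ _ <|
    ((isCompactOperator_of_locallyCompactSpace_dom (lp.evalCLM 𝕜 (fun _ : ι => 𝕜) p i)).clm_comp
      (lp.singleContinuousLinearMap 𝕜 (fun _ : ι => 𝕜) p i) :)

lemma isCompactOperator_of_diagonal [ProperSpace 𝕜] (hD : ∀ a i, D a i = d i * a i)
    (hd : Tendsto d cofinite (𝓝 0)) : IsCompactOperator D := by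
  classical
  refine isCompactOperator_of_tendsto (l := atTop) (F := diagonalTrunc p d) ?_
    (Eventually.of_forall isCompactOperator_diagonalTrunc)
  refine Metric.tendsto_nhds.2 fun ε hε => ?_
  have hsmall : {i | ¬ ‖d i‖ < ε / 2}.Finite :=
    eventually_cofinite.1 (hd.norm.eventually (gt_mem_nhds (norm_zero.trans_lt (half_pos hε))))
  refine eventually_atTop.2 ⟨hsmall.toFinset, fun s hs => ?_⟩
  rw [dist_comm, dist_eq_norm]
  refine (opNorm_le_of_diagonal (d := d - (s : Set ι).indicator d) (fun a i => ?_) (half_pos hε).le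
    fun i => ?_).trans_lt (half_lt_self hε)
  · rw [sub_apply, lp.coeFn_sub, Pi.sub_apply, hD, diagonalTrunc_apply,
      Pi.sub_apply, sub_mul]
  · by_cases hi : i ∈ s
    · simpa [hi] using (half_pos hε).le
    · have hdi : ‖d i‖ < ε / 2 := by simpa using mt (fun h => hs (hsmall.mem_toFinset.2 h)) hi
      simpa [hi] using hdi.le

end Diagonal

lemma IsHankel.eq_diagonal_comp_comp_diagonal {T Tr D : H →L[ℂ] H} {α d : ℕ+ → ℂ}
    (hd : ∀ n m, d (n * m) = d n * d m) (hT : IsHankel T α)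
    (hTr : IsHankel Tr fun n => d n * α n) (hD : ∀ a n, D a n = d n * a n) :
    Tr = D ∘L T ∘L D := by
  refine lp.ext_single_one ENNReal.ofNat_ne_top fun n => lp.ext <| funext fun m => ?_
  rw [hTr, ContinuousLinearMap.comp_apply, ContinuousLinearMap.comp_apply, hD,
    apply_single_of_diagonal hD, map_smul, lp.coeFn_smul, Pi.smul_apply, smul_eq_mul, hT]
  simp only [hd]
  ring

lemma tendsto_pow_Om_cofinite {r : ℝ} (hr0 : 0 ≤ r) (hr1 : r < 1) :
    Tendsto (fun n => (r : ℂ) ^ Om n) cofinite (𝓝 0) :=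
  (tendsto_pow_atTop_nhds_zero_of_norm_lt_one
    (by rwa [Complex.norm_real, Real.norm_of_nonneg hr0])).comp tendsto_Om_cofinite_atTop

/-- if `M(α)` is bounded, `D_r` is the diagonal operator by `r^{Ω'}` and
`M(α_r)` is the Hankel operator of `α_r = D_r α`, then `M(α_r) = D_r M(α) D_r`,
`M(α_r)` is compact and `‖M(α_r)‖ ≤ ‖M(α)‖`. -/
theorem hankel_dilation_eq (r : ℝ) (hr0 : 0 < r) (hr1 : r < 1)
    (α : ℕ+ → ℂ) (T Tr D : H →L[ℂ] H)
    (hT : IsHankel T α) (hTr : IsHankel Tr fun n => (r : ℂ) ^ Om n * α n)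
    (hD : ∀ (a : H) (n : ℕ+), (D a : ℕ+ → ℂ) n = (r : ℂ) ^ Om n * a n) :
    Tr = D ∘L T ∘L D ∧ IsCompactOperator Tr ∧ ‖Tr‖ ≤ ‖T‖ := by
  have hTr_eq : Tr = D ∘L T ∘L D :=
    IsHankel.eq_diagonal_comp_comp_diagonal (fun n m => by rw [Om_mul, pow_add]) hT hTr hD
  have hD_compact : IsCompactOperator D :=
    isCompactOperator_of_diagonal hD (tendsto_pow_Om_cofinite hr0.le hr1)
  have hD_norm : ‖D‖ ≤ 1 := opNorm_le_of_diagonal hD zero_le_one fun n => by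
    rw [norm_pow, Complex.norm_real, Real.norm_of_nonneg hr0.le]
    exact pow_le_one₀ hr0.le hr1.le
  refine ⟨hTr_eq, hTr_eq ▸ hD_compact.comp_clm (T ∘L D), ?_⟩
  calc ‖Tr‖ ≤ ‖D‖ * (‖T‖ * ‖D‖) := hTr_eq ▸ (D.opNorm_comp_le _).trans
        (mul_le_mul_of_nonneg_left (T.opNorm_comp_le D) (norm_nonneg D))
    _ ≤ 1 * (‖T‖ * 1) := by gcongr
    _ = ‖T‖ := by ring
end
end

section
/- Let m** be a bounded functional on ℳ₀* (i.e. m** ∈ ℳ₀**) and set α = I**(m**) ∈ ℓ²(ℕ+), where I : ℳ₀ → ℓ² is the inclusion M(β) ↦ β. Then M(α) is a bounded multiplicative Hankel operator with ‖M(α)‖ ≤ ‖m**‖. -/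
/-!
For finitely supported `a` and any `b ∈ ℓ²`, the functional `φ T = (T a, b)` on `ℳ₀` has norm at
most `‖a‖ ‖b‖`. Since every `T ∈ ℳ₀` is Hankel with symbol `I T`, also `φ T = (I T, a ⋆ b)` with
`(a ⋆ b)(k) = ∑_{nm = k} a(n) b(m) ∈ ℓ²`, so `m** φ = (α, a ⋆ b) = ∑ₙ a(n) ∑ₘ α(nm) b(m)`. Thus
`|∑ₙ a(n) (M(α) b)(n)| ≤ ‖m**‖ ‖a‖ ‖b‖`, and testing against finitely supported `a` shows that
`M(α) b ∈ ℓ²` with `‖M(α) b‖ ≤ ‖m**‖ ‖b‖`. No weak* approximation is needed.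
-/

open scoped ComplexConjugate

set_option synthInstance.maxHeartbeats 1000000
set_option maxHeartbeats 1000000

noncomputable section

/-- The topological dual `E →L[𝕜] 𝕜` of a normed space, as `NormedSpace.Dual` was defined in
older Mathlib (removed since; `StrongDual` takes only topological binders). -/
abbrev NormedSpace.Dual (𝕜 : Type*) [NontriviallyNormedField 𝕜] (E : Type*)
    [SeminormedAddCommGroup E] [NormedSpace 𝕜 E] : Type _ :=
  E →L[𝕜] 𝕜

instance NormedSpace.Dual.instSeminormedAddCommGroup (𝕜 : Type*) [NontriviallyNormedField 𝕜]
    (E : Type*) [SeminormedAddCommGroup E] [NormedSpace 𝕜 E] :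
    SeminormedAddCommGroup (NormedSpace.Dual 𝕜 E) :=
  ContinuousLinearMap.toSeminormedAddCommGroup

instance NormedSpace.Dual.instNormedSpace (𝕜 : Type*) [NontriviallyNormedField 𝕜]
    (E : Type*) [SeminormedAddCommGroup E] [NormedSpace 𝕜 E] :
    NormedSpace 𝕜 (NormedSpace.Dual 𝕜 E) :=
  ContinuousLinearMap.toNormedSpace

open Function
open scoped ENNReal

theorem Memℓp.comp_injective {ι κ E : Type*} [NormedAddCommGroup E] {p : ℝ≥0∞} {x : κ → E}
    (hx : Memℓp x p) (hp : 0 < p.toReal) {f : ι → κ} (hf : Injective f) : Memℓp (x ∘ f) p :=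
  memℓp_gen ((hx.summable hp).comp_injective hf)

theorem Memℓp.extend_zero {ι κ E : Type*} [NormedAddCommGroup E] {p : ℝ≥0∞} {b : ι → E}
    (hb : Memℓp b p) (hp : 0 < p.toReal) {f : ι → κ} (hf : Injective f) :
    Memℓp (extend f b 0) p := by
  refine memℓp_gen ?_
  have : (fun k => ‖extend f b 0 k‖ ^ p.toReal) = extend f (fun i => ‖b i‖ ^ p.toReal) 0 := by
    funext k
    rw [apply_extend (fun y : E => ‖y‖ ^ p.toReal)]
    simp only [comp_def, Pi.zero_apply, norm_zero, Real.zero_rpow hp.ne']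
    rfl
  rw [this, summable_extend_zero hf]
  exact hb.summable hp

namespace lp

variable {ι κ 𝕜 : Type*} [RCLike 𝕜]

local notation "ℓ²[" ι "]" => lp (fun _ : ι => 𝕜) 2

def pairing : ℓ²[ι] →L[𝕜] ℓ²[ι] →L[𝕜] 𝕜 :=
  (innerSL 𝕜).comp (starL 𝕜 : ℓ²[ι] ≃L⋆[𝕜] ℓ²[ι]).toContinuousLinearMap

theorem pairing_apply (x y : ℓ²[ι]) : pairing x y = ∑' k, x k * y k := by
  simp [pairing, lp.inner_eq_tsum, mul_comm]

theorem norm_pairing_apply_le (x y : ℓ²[ι]) : ‖pairing x y‖ ≤ ‖x‖ * ‖y‖ := by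
  simpa [pairing] using norm_inner_le_norm (𝕜 := 𝕜) (star x) y

theorem pairing_single_right [DecidableEq ι] (x : ℓ²[ι]) (i : ι) (z : 𝕜) :
    pairing x (lp.single 2 i z) = x i * z := by
  simp [pairing, lp.inner_single_right, mul_comm]

def precomp {f : ι → κ} (hf : Injective f) (x : ℓ²[κ]) : ℓ²[ι] :=
  ⟨x ∘ f, (lp.memℓp x).comp_injective (by norm_num) hf⟩

def extendByZero {f : ι → κ} (hf : Injective f) (b : ℓ²[ι]) : ℓ²[κ] :=
  ⟨extend f b 0, (lp.memℓp b).extend_zero (by norm_num) hf⟩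

theorem pairing_extendByZero {f : ι → κ} (hf : Injective f) (x : ℓ²[κ]) (b : ℓ²[ι]) :
    pairing x (extendByZero hf b) = pairing (precomp hf x) b := by
  have : (fun k => x k * extend f b 0 k) = extend f (fun i => x (f i) * b i) 0 := by
    funext k
    by_cases hk : ∃ i, f i = k
    · obtain ⟨i, rfl⟩ := hk
      simp only [hf.extend_apply]
    · simp only [extend_apply' _ _ _ hk, Pi.zero_apply, mul_zero]
  rw [pairing_apply, pairing_apply]
  exact (congrArg tsum this).trans (tsum_extend_zero hf _)

theorem sum_norm_sq_le_of_norm_sum_mul_le [DecidableEq ι] {v : ι → 𝕜} {C : ℝ}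
    (h : ∀ (s : Finset ι) (a : ι → 𝕜),
      ‖∑ n ∈ s, a n * v n‖ ≤ C * ‖∑ n ∈ s, lp.single 2 n (a n)‖)
    (s : Finset ι) : ∑ n ∈ s, ‖v n‖ ^ 2 ≤ C ^ 2 := by
  set x := ‖∑ n ∈ s, lp.single 2 n (starRingEnd 𝕜 (v n))‖
  have hx : x ^ 2 = ∑ n ∈ s, ‖v n‖ ^ 2 := by
    simpa [Real.rpow_two] using lp.norm_sum_single (E := fun _ : ι => 𝕜) (p := 2)
      (by norm_num) (fun n => starRingEnd 𝕜 (v n)) s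
  have hsum : ∑ n ∈ s, starRingEnd 𝕜 (v n) * v n = ((∑ n ∈ s, ‖v n‖ ^ 2 : ℝ) : 𝕜) := by
    push_cast
    exact Finset.sum_congr rfl fun n _ => RCLike.conj_mul (v n)
  have hxC : x ^ 2 ≤ C * x := by
    have := h s fun n => starRingEnd 𝕜 (v n)
    rwa [hsum, RCLike.norm_ofReal, abs_of_nonneg (by positivity), ← hx] at this
  nlinarith [norm_nonneg (∑ n ∈ s, lp.single 2 n (starRingEnd 𝕜 (v n)))]

theorem exists_clm_apply_eq_of_norm_sum_le [DecidableEq ι] {E : Type*} [NormedAddCommGroup E]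
    [NormedSpace 𝕜 E] (L : ι → E →ₗ[𝕜] 𝕜) {C : ℝ} (hC : 0 ≤ C)
    (h : ∀ (b : E) (s : Finset ι) (a : ι → 𝕜),
      ‖∑ n ∈ s, a n * L n b‖ ≤ C * ‖∑ n ∈ s, lp.single 2 n (a n)‖ * ‖b‖) :
    ∃ T : E →L[𝕜] ℓ²[ι], (∀ b n, T b n = L n b) ∧ ‖T‖ ≤ C := by
  have hL (b : E) (s : Finset ι) :
      ∑ n ∈ s, ‖L n b‖ ^ (2 : ℝ≥0∞).toReal ≤ (C * ‖b‖) ^ (2 : ℝ≥0∞).toReal := by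
    simpa [Real.rpow_two] using
      sum_norm_sq_le_of_norm_sum_mul_le (fun s a => (h b s a).trans_eq (mul_right_comm _ _ _)) s
  let T : E →ₗ[𝕜] ℓ²[ι] :=
    { toFun b := ⟨fun n => L n b, memℓp_gen' (hL b)⟩
      map_add' b b' := lp.ext <| funext fun n => map_add (L n) b b'
      map_smul' z b := lp.ext <| funext fun n => map_smul (L n) z b }
  have hT (b : E) : ‖T b‖ ≤ C * ‖b‖ :=
    lp.norm_le_of_forall_sum_le (by norm_num) (by positivity) (hL b)
  exact ⟨T.mkContinuous C hT, fun _ _ => rfl, T.mkContinuous_norm_le hC hT⟩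

end lp

open lp

theorem IsHankel.apply_single_one {T : H →L[ℂ] H} {β : H} (hT : IsHankel T β) (n : ℕ+) :
    T (lp.single 2 n 1) = precomp (mul_right_injective n) β :=
  lp.ext (funext (hT n))

theorem IsHankel.pairing_apply_sum_single {T : H →L[ℂ] H} {β : H} (hT : IsHankel T β)
    (s : Finset ℕ+) (a : ℕ+ → ℂ) (b : H) :
    pairing (T (∑ n ∈ s, lp.single 2 n (a n))) b =
      pairing β (∑ n ∈ s, a n • extendByZero (mul_right_injective n) b) := by
  have hsingle (n : ℕ+) : (lp.single 2 n (a n) : H) = a n • lp.single 2 n 1 := by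
    rw [← lp.single_smul, smul_eq_mul, mul_one]
  simp only [hsingle, map_sum, map_smul, sum_apply,
    smul_apply, hT.apply_single_one, pairing_extendByZero]

theorem norm_sum_mul_pairing_precomp_le {S : Submodule ℂ (H →L[ℂ] H)} (I : S →L[ℂ] H)
    (hHank : ∀ T : S, IsHankel T (I T)) (mss : NormedSpace.Dual ℂ (NormedSpace.Dual ℂ S))
    (α : H) (hpair : ∀ (c : H) (φ : NormedSpace.Dual ℂ S),
      (∀ T : S, φ T = pairing (I T) c) → mss φ = pairing α c)
    (b : H) (s : Finset ℕ+) (a : ℕ+ → ℂ) :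
    ‖∑ n ∈ s, a n * pairing (precomp (mul_right_injective n) α) b‖ ≤
      ‖mss‖ * ‖∑ n ∈ s, lp.single 2 n (a n)‖ * ‖b‖ := by
  set c := ∑ n ∈ s, a n • extendByZero (mul_right_injective n) b
  set φ : NormedSpace.Dual ℂ S := (pairing.flip c).comp I
  have hφ_norm : ‖φ‖ ≤ ‖∑ n ∈ s, lp.single 2 n (a n)‖ * ‖b‖ := by
    refine ContinuousLinearMap.opNorm_le_bound _ (by positivity) fun T => ?_
    calc ‖φ T‖ = ‖pairing (T.val (∑ n ∈ s, lp.single 2 n (a n))) b‖ :=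
          congrArg norm ((hHank T).pairing_apply_sum_single s a b).symm
      _ ≤ ‖T.val (∑ n ∈ s, lp.single 2 n (a n))‖ * ‖b‖ := norm_pairing_apply_le _ _
      _ ≤ ‖∑ n ∈ s, lp.single 2 n (a n)‖ * ‖b‖ * ‖T‖ := by
          rw [mul_right_comm]
          gcongr
          exact (T.val.le_opNorm _).trans_eq (mul_comm _ _)
  have hmss : mss φ = ∑ n ∈ s, a n * pairing (precomp (mul_right_injective n) α) b := by
    simp only [hpair c φ fun T => rfl, c, map_sum, map_smul, pairing_extendByZero, smul_eq_mul]
  rw [← hmss, mul_assoc]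
  exact mss.le_opNorm_of_le hφ_norm

/-- if `m** ∈ ℳ₀**` and `α = I**(m**) ∈ ℓ²(ℕ+)` (characterized by
`m**(I* a) = (α, a) = ∑ α(n) a(n)` for all `a ∈ ℓ²`, where `I* a` is the functional
`T ↦ (I T, a)` on `ℳ₀`), then `M(α)` is bounded with `‖M(α)‖ ≤ ‖m**‖`. -/
theorem bidual_image_is_bounded_hankel
    (S₀ : Submodule ℂ (H →L[ℂ] H))
    (hS₀ : (S₀ : Set (H →L[ℂ] H)) = {T | (∃ α, IsHankel T α) ∧ IsCompactOperator T})
    (I : ↥S₀ →L[ℂ] H)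
    (hI : ∀ (T : ↥S₀) (α : ℕ+ → ℂ), IsHankel T.val α → ((I T : ℕ+ → ℂ) = α))
    (mss : NormedSpace.Dual ℂ (NormedSpace.Dual ℂ ↥S₀))
    (α : ℕ+ → ℂ) (hα : Memℓp α 2)
    (hpair : ∀ (a : H) (φ : NormedSpace.Dual ℂ ↥S₀),
      (∀ T : ↥S₀, φ T = ∑' n : ℕ+, (I T : ℕ+ → ℂ) n * a n) →
      mss φ = ∑' n : ℕ+, α n * a n) :
    ∃ T : H →L[ℂ] H, IsHankel T α ∧ ‖T‖ ≤ ‖mss‖ := by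
  have hHank (T : S₀) : IsHankel T (I T) := by
    obtain ⟨⟨β, hβ⟩, -⟩ : T.val ∈ {T | (∃ α, IsHankel T α) ∧ IsCompactOperator T} :=
      hS₀ ▸ T.2
    rwa [hI T β hβ]
  let αH : H := ⟨α, hα⟩
  have hpair' (c : H) (φ : NormedSpace.Dual ℂ S₀) (hφ : ∀ T : S₀, φ T = pairing (I T) c) :
      mss φ = pairing αH c := by
    simpa only [pairing_apply] using hpair c φ (by simpa only [pairing_apply] using hφ)
  obtain ⟨T, hT, hT_norm⟩ := exists_clm_apply_eq_of_norm_sum_le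
    (fun n => (pairing (precomp (mul_right_injective n) αH)).toLinearMap) (norm_nonneg mss)
    (norm_sum_mul_pairing_precomp_le I hHank mss αH hpair')
  refine ⟨T, fun n m => ?_, hT_norm⟩
  rw [hT, ContinuousLinearMap.coe_coe, pairing_single_right, mul_one, mul_comm]
  rfl
end
end

section
/- Let 𝒳 be the completion of the space X of finite sums of Dirichlet convolutions of finite sequences with the projective norm. For each bounded multiplicative Hankel operator m = M(α), the functional Jm(c) = ∑_n α(n) c(n) on X extends to 𝒳 with ‖Jm‖_{𝒳*} = ‖M(α)‖, and J : ℳ → 𝒳* is an isometric isomorphism onto 𝒳*. -/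
open scoped ComplexConjugate

noncomputable section

/-- extend a sequence on ℕ+ to ℕ by zero -/
def ext (a : ℕ+ → ℂ) : ℕ → ℂ := fun n => if h : 0 < n then a ⟨n, h⟩ else 0

/-- Dirichlet convolution with conjugation in the second argument -/
def dConv (a b : ℕ+ → ℂ) : ℕ+ → ℂ := fun n =>
  ∑ k ∈ (n : ℕ).divisors, ext a k * conj (ext b ((n : ℕ) / k))

/-- the ℓ² norm of a sequence -/
def l2norm (a : ℕ+ → ℂ) : ℝ := Real.sqrt (∑' n, ‖a n‖ ^ 2)

/-- `L` is a representation of `c` as a finite sum of Dirichlet convolutions of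
finitely supported sequences. -/
def XRep (c : ℕ+ → ℂ) (L : List ((ℕ+ → ℂ) × (ℕ+ → ℂ))) : Prop :=
  (∀ p ∈ L, (Function.support p.1).Finite ∧ (Function.support p.2).Finite) ∧
  c = fun n => (L.map fun p => dConv p.1 p.2 n).sum

/-- the space `X` of finite sums of Dirichlet convolutions of finite sequences -/
def XSet : Set (ℕ+ → ℂ) := {c | ∃ L, XRep c L}

/-- the projective norm on `X`:
`‖c‖_X = inf ∑_k ‖a_k‖_{ℓ²} ‖b_k‖_{ℓ²}` over all finite representations of `c`. -/
def normX (c : ℕ+ → ℂ) : ℝ :=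
  sInf {x | ∃ L, XRep c L ∧ x = (L.map fun p => l2norm p.1 * l2norm p.2).sum}

/-!
For finite `a, b` the pairing `∑ α (a ⋆ b)` equals `∑_m conj(b m) (M(α) a)(m) = ⟨M(α) a, b⟩`.
So a bounded `M(α)` bounds the pairing on one convolution by `‖M(α)‖ ‖a‖ ‖b‖`, and the triangle
inequality over any representation of `c` bounds `J c = ∑ α c` by `‖M(α)‖ ‖c‖_X`.

Conversely, suppose only that `|∑ α (a ⋆ b)| ≤ K ‖a‖ ‖b‖` for finite `a, b`. Pairing `a` with
the truncation of `M(α) a` to a finite set `S` gives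
`∑_S |M(α) a|² ≤ K ‖a‖ (∑_S |M(α) a|²)^{1/2}`, so `M(α) a ∈ ℓ²` with norm at most `K ‖a‖`.
Taking `K = sup_{‖c‖_X ≤ 1} |J c|` (reached after normalising `a` and `b`) gives `‖M(α)‖ ≤ K`;
for a bounded functional `ℓ` on `X` and `α(n) = ℓ(e_n)` it defines `M(α)` as a bounded operator
on finite sequences, which extends to `ℓ²` by density.
-/

open Function

lemma ext_coe (a : ℕ+ → ℂ) (n : ℕ+) : ext a n = a n := by
  simp only [ext, n.pos, dite_true]
  rfl

lemma exists_pnat_of_ext_ne_zero {a : ℕ+ → ℂ} {k : ℕ} (h : ext a k ≠ 0) :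
    ∃ d : ℕ+, (d : ℕ) = k ∧ a d ≠ 0 := by
  unfold ext at h
  split_ifs at h with hk
  · exact ⟨⟨k, hk⟩, rfl, h⟩
  · exact absurd rfl h

section DirichletConvolution

variable {a b : ℕ+ → ℂ} {Sa Sb : Finset ℕ+}

lemma dConv_apply_eq_sum (ha : support a ⊆ Sa) (hb : support b ⊆ Sb) (n : ℕ+) :
    dConv a b n = ∑ p ∈ Sa ×ˢ Sb with p.1 * p.2 = n, a p.1 * conj (b p.2) := by
  rw [dConv, ← Nat.sum_divisorsAntidiagonal fun i j => ext a i * conj (ext b j)]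
  refine (Finset.sum_bij_ne_zero (fun p _ _ => ((p.1 : ℕ), (p.2 : ℕ))) ?_ ?_ ?_ ?_).symm
  · intro p hp _
    rw [Finset.mem_filter] at hp
    simp [← hp.2]
  · intro p _ _ q _ _ h
    simp only [Prod.mk.injEq, PNat.coe_inj] at h
    exact Prod.ext h.1 h.2
  · rintro ⟨i, j⟩ hq hne
    obtain ⟨d, rfl, had⟩ := exists_pnat_of_ext_ne_zero (left_ne_zero_of_mul hne)
    obtain ⟨m, rfl, hbm⟩ := exists_pnat_of_ext_ne_zero fun h =>
      right_ne_zero_of_mul hne (by rw [h, map_zero])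
    refine ⟨(d, m), ?_, by simpa [ext_coe] using hne, rfl⟩
    rw [Nat.mem_divisorsAntidiagonal] at hq
    exact Finset.mem_filter.2
      ⟨Finset.mem_product.2 ⟨ha had, hb hbm⟩, PNat.coe_injective (by simpa using hq.1)⟩
  · intro p _ _
    simp [ext_coe]

lemma support_dConv_subset (ha : support a ⊆ Sa) (hb : support b ⊆ Sb) :
    support (dConv a b) ⊆ (Sa ×ˢ Sb).image fun p => p.1 * p.2 := by
  intro n hn
  rw [mem_support, dConv_apply_eq_sum ha hb] at hn
  obtain ⟨p, hp, -⟩ := Finset.exists_ne_zero_of_sum_ne_zero hn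
  rw [Finset.mem_filter] at hp
  exact Finset.mem_image.2 ⟨p, hp⟩

lemma finite_support_dConv (ha : (support a).Finite) (hb : (support b).Finite) :
    (support (dConv a b)).Finite :=
  (Finset.finite_toSet _).subset
    (support_dConv_subset ha.coe_toFinset.superset hb.coe_toFinset.superset)

lemma dConv_single_single (n m : ℕ+) (s t : ℂ) :
    dConv (Pi.single n s) (Pi.single m t) = Pi.single (n * m) (s * conj t) := by
  funext k
  rw [dConv_apply_eq_sum (Sa := {n}) (Sb := {m}) (by simpa using Pi.support_single_subset)
    (by simpa using Pi.support_single_subset), Finset.singleton_product_singleton,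
    Finset.filter_singleton]
  by_cases h : n * m = k
  · simp [h]
  · simp [h, Pi.single_apply, Ne.symm h]

/-- `(M(α) a)(m)`, with the junk value `0` where the series does not converge. -/
def hankelApply (α a : ℕ+ → ℂ) (m : ℕ+) : ℂ := ∑' d, α (d * m) * a d

lemma hankelApply_eq_sum (α : ℕ+ → ℂ) (ha : support a ⊆ Sa) (m : ℕ+) :
    hankelApply α a m = ∑ d ∈ Sa, α (d * m) * a d :=
  tsum_eq_sum' ((support_mul_subset_right _ _).trans ha)

lemma hankelApply_smul (α : ℕ+ → ℂ) (s : ℂ) (a : ℕ+ → ℂ) :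
    hankelApply α (s • a) = s • hankelApply α a := by
  funext m
  simp only [hankelApply, Pi.smul_apply, smul_eq_mul, ← tsum_mul_left]
  exact tsum_congr fun d => by ring

lemma hankelApply_add (α : ℕ+ → ℂ) {a b : ℕ+ → ℂ} (ha : (support a).Finite)
    (hb : (support b).Finite) : hankelApply α (a + b) = hankelApply α a + hankelApply α b := by
  funext m
  simp only [hankelApply, Pi.add_apply, mul_add]
  exact (summable_of_hasFiniteSupport (ha.subset (support_mul_subset_right _ _))).tsum_add
    (summable_of_hasFiniteSupport (hb.subset (support_mul_subset_right _ _)))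

theorem tsum_mul_dConv (α : ℕ+ → ℂ) (ha : support a ⊆ Sa) (hb : support b ⊆ Sb) :
    ∑' n, α n * dConv a b n = ∑ m ∈ Sb, conj (b m) * hankelApply α a m := by
  rw [tsum_eq_sum' ((support_mul_subset_right _ _).trans (support_dConv_subset ha hb)),
    Finset.sum_image' (fun p => α (p.1 * p.2) * (a p.1 * conj (b p.2))),
    Finset.sum_product_right]
  · refine Finset.sum_congr rfl fun m _ => ?_
    rw [hankelApply_eq_sum α ha, Finset.mul_sum]
    exact Finset.sum_congr rfl fun d _ => by ring
  · intro p _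
    rw [dConv_apply_eq_sum ha hb, Finset.mul_sum]
    exact Finset.sum_congr rfl fun q hq => by rw [(Finset.mem_filter.1 hq).2]

end DirichletConvolution

lemma l2norm_eq_norm (x : H) : l2norm x = ‖x‖ := by
  rw [l2norm, lp.norm_eq_tsum_rpow (by norm_num), Real.sqrt_eq_rpow]
  norm_num

lemma memℓp_two_of_finite_support {a : ℕ+ → ℂ} (ha : (support a).Finite) : Memℓp a 2 :=
  (memℓp_zero ha).of_exponent_ge (by norm_num)

def toH (a : ℕ+ → ℂ) (ha : (support a).Finite) : H := ⟨a, memℓp_two_of_finite_support ha⟩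

lemma norm_toH (a : ℕ+ → ℂ) (ha : (support a).Finite) : ‖toH a ha‖ = l2norm a :=
  (l2norm_eq_norm _).symm

lemma l2norm_nonneg (a : ℕ+ → ℂ) : 0 ≤ l2norm a := Real.sqrt_nonneg _

lemma l2norm_smul (s : ℂ) (a : ℕ+ → ℂ) : l2norm (s • a) = ‖s‖ * l2norm a := by
  simp only [l2norm, Pi.smul_apply, smul_eq_mul, norm_mul, mul_pow, tsum_mul_left]
  rw [Real.sqrt_mul (sq_nonneg _), Real.sqrt_sq (norm_nonneg _)]

lemma eq_zero_of_l2norm_eq_zero {a : ℕ+ → ℂ} (ha : (support a).Finite) (h : l2norm a = 0) :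
    a = 0 := by
  rw [← norm_toH a ha, norm_eq_zero] at h
  exact congrArg Subtype.val h

lemma norm_le_of_forall_sum_sq_le (x : H) {C : ℝ} (hC : 0 ≤ C)
    (h : ∀ S : Finset ℕ+, ∑ i ∈ S, ‖x i‖ ^ 2 ≤ C ^ 2) : ‖x‖ ≤ C :=
  lp.norm_le_of_forall_sum_le (by norm_num) hC (by simpa using h)

def finiteSupportSubmodule : Submodule ℂ H where
  carrier := {x | (support (x : ℕ+ → ℂ)).Finite}
  add_mem' hx hy := (hx.union hy).subset (support_add _ _)
  zero_mem' := by
    change (support fun _ : ℕ+ => (0 : ℂ)).Finite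
    simp
  smul_mem' c _ hx := hx.subset (support_const_smul_subset c _)

lemma dense_finiteSupportSubmodule : Dense (finiteSupportSubmodule : Set H) := by
  intro x
  refine mem_closure_of_tendsto (lp.hasSum_single (by norm_num) x) (Filter.Eventually.of_forall
    fun S => Submodule.sum_mem _ fun n _ => ?_)
  exact (Set.finite_singleton n).subset (by rw [lp.coeFn_single]; exact Pi.support_single_subset)

section ProjectiveNorm

variable {c c' : ℕ+ → ℂ} {L L' : List ((ℕ+ → ℂ) × (ℕ+ → ℂ))}

lemma XRep.finite_support (h : XRep c L) : (support c).Finite := by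
  obtain ⟨hL, rfl⟩ := h
  induction L with
  | nil => simp
  | cons p L ih =>
    obtain ⟨hp₁, hp₂⟩ := hL p List.mem_cons_self
    refine ((finite_support_dConv hp₁ hp₂).union
      (ih fun q hq => hL q (List.mem_cons_of_mem _ hq))).subset ?_
    simpa only [List.map_cons, List.sum_cons] using support_add (dConv p.1 p.2) _

lemma XRep_nil : XRep 0 [] :=
  ⟨by simp, by funext; simp⟩

lemma XRep_singleton {a b : ℕ+ → ℂ} (ha : (support a).Finite) (hb : (support b).Finite) :
    XRep (dConv a b) [(a, b)] :=
  ⟨by simpa using And.intro ha hb, by funext; simp⟩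

lemma XRep.append (h : XRep c L) (h' : XRep c' L') : XRep (c + c') (L ++ L') := by
  refine ⟨fun p hp => (List.mem_append.1 hp).elim (h.1 p) (h'.1 p), ?_⟩
  rw [h.2, h'.2]
  funext
  simp

lemma zero_mem_XSet : (0 : ℕ+ → ℂ) ∈ XSet := ⟨[], XRep_nil⟩

lemma add_mem_XSet (hc : c ∈ XSet) (hc' : c' ∈ XSet) : c + c' ∈ XSet :=
  let ⟨L, hL⟩ := hc
  let ⟨L', hL'⟩ := hc'
  ⟨L ++ L', hL.append hL'⟩

lemma dConv_mem_XSet {a b : ℕ+ → ℂ} (ha : (support a).Finite) (hb : (support b).Finite) :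
    dConv a b ∈ XSet :=
  ⟨_, XRep_singleton ha hb⟩

lemma single_mem_XSet (n : ℕ+) (s : ℂ) : Pi.single n s ∈ XSet := by
  simpa [dConv_single_single] using dConv_mem_XSet (a := Pi.single n s) (b := Pi.single 1 1)
    ((Set.finite_singleton n).subset Pi.support_single_subset)
    ((Set.finite_singleton 1).subset Pi.support_single_subset)

lemma sum_l2norm_mul_nonneg (L : List ((ℕ+ → ℂ) × (ℕ+ → ℂ))) :
    0 ≤ (L.map fun p => l2norm p.1 * l2norm p.2).sum :=
  List.sum_nonneg fun _ hx => by
    obtain ⟨p, -, rfl⟩ := List.mem_map.1 hx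
    exact mul_nonneg (l2norm_nonneg _) (l2norm_nonneg _)

lemma normX_le (h : XRep c L) : normX c ≤ (L.map fun p => l2norm p.1 * l2norm p.2).sum :=
  csInf_le ⟨0, by rintro _ ⟨L, -, rfl⟩; exact sum_l2norm_mul_nonneg L⟩ ⟨L, h, rfl⟩

lemma normX_nonneg (hc : c ∈ XSet) : 0 ≤ normX c :=
  let ⟨L, hL⟩ := hc
  le_csInf ⟨_, L, hL, rfl⟩ (by rintro _ ⟨L, -, rfl⟩; exact sum_l2norm_mul_nonneg L)

lemma normX_dConv_le {a b : ℕ+ → ℂ} (ha : (support a).Finite) (hb : (support b).Finite) :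
    normX (dConv a b) ≤ l2norm a * l2norm b := by
  simpa using normX_le (XRep_singleton ha hb)

end ProjectiveNorm

lemma le_sq_of_le_mul_sqrt {t K : ℝ} (ht : 0 ≤ t) (h : t ≤ K * √t) : t ≤ K ^ 2 := by
  nlinarith [Real.sq_sqrt ht, sq_nonneg (K - √t)]

def HankelFormBounded (α : ℕ+ → ℂ) (K : ℝ) : Prop :=
  ∀ a b : ℕ+ → ℂ, (support a).Finite → (support b).Finite →
    ‖∑' n, α n * dConv a b n‖ ≤ K * (l2norm a * l2norm b)

namespace HankelFormBounded

variable {α : ℕ+ → ℂ} {K : ℝ} {a c : ℕ+ → ℂ}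

lemma sum_sq_hankelApply_le (hα : HankelFormBounded α K) (ha : (support a).Finite)
    (S : Finset ℕ+) : ∑ m ∈ S, ‖hankelApply α a m‖ ^ 2 ≤ (K * l2norm a) ^ 2 := by
  set v := hankelApply α a
  set b := Set.indicator (S : Set ℕ+) v
  have hb : support b ⊆ S := Set.support_indicator_subset
  have hbv : ∀ m ∈ S, b m = v m := fun m hm => Set.indicator_of_mem hm v
  have hpair : ∑' n, α n * dConv a b n = ((∑ m ∈ S, ‖v m‖ ^ 2 : ℝ) : ℂ) := by
    rw [tsum_mul_dConv α ha.coe_toFinset.superset hb]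
    push_cast
    exact Finset.sum_congr rfl fun m hm => by rw [hbv m hm]; exact Complex.conj_mul' _
  have hb_norm : l2norm b = √(∑ m ∈ S, ‖v m‖ ^ 2) := by
    have hsq : support (fun n => ‖b n‖ ^ 2) ⊆ S := fun n hn => hb fun h => hn (by simp [h])
    rw [l2norm, tsum_eq_sum' hsq]
    exact congrArg _ (Finset.sum_congr rfl fun m hm => by rw [hbv m hm])
  have := hα a b ha (S.finite_toSet.subset hb)
  rw [hpair, Complex.norm_real, Real.norm_of_nonneg (by positivity), hb_norm, ← mul_assoc] at this
  exact le_sq_of_le_mul_sqrt (by positivity) this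

lemma memℓp_hankelApply (hα : HankelFormBounded α K) (ha : (support a).Finite) :
    Memℓp (hankelApply α a) 2 :=
  memℓp_gen' (C := (K * l2norm a) ^ 2) (by simpa using hα.sum_sq_hankelApply_le ha)

lemma norm_le_of_coe_eq_hankelApply (hα : HankelFormBounded α K) (hK : 0 ≤ K)
    (ha : (support a).Finite) {x : H} (hx : ⇑x = hankelApply α a) : ‖x‖ ≤ K * l2norm a :=
  norm_le_of_forall_sum_sq_le x (mul_nonneg hK (l2norm_nonneg a))
    (hx ▸ hα.sum_sq_hankelApply_le ha)

theorem exists_isHankel (hα : HankelFormBounded α K) (hK : 0 ≤ K) :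
    ∃ T : H →L[ℂ] H, IsHankel T α := by
  let D := finiteSupportSubmodule
  let f : D →ₗ[ℂ] H :=
    { toFun x := ⟨hankelApply α x, hα.memℓp_hankelApply x.2⟩
      map_add' x y := lp.ext (hankelApply_add α x.2 y.2)
      map_smul' c x := lp.ext (hankelApply_smul α c x) }
  have hdense : DenseRange D.subtype := by
    simpa [DenseRange] using dense_finiteSupportSubmodule
  have hbound : ∀ x : D, ‖f x‖ ≤ K * ‖D.subtype x‖ := fun x =>
    (hα.norm_le_of_coe_eq_hankelApply hK x.2 (x := f x) rfl).trans_eq (by rw [l2norm_eq_norm]; rfl)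
  refine ⟨f.extendOfNorm D.subtype, fun n m => ?_⟩
  have hn : lp.single 2 n (1 : ℂ) ∈ D :=
    (Set.finite_singleton n).subset (by rw [lp.coeFn_single]; exact Pi.support_single_subset)
  rw [show lp.single 2 n (1 : ℂ) = D.subtype ⟨_, hn⟩ from rfl,
    LinearMap.extendOfNorm_eq hdense ⟨K, hbound⟩]
  change hankelApply α (lp.single 2 n 1) m = α (n * m)
  rw [hankelApply, tsum_eq_single n fun d hd => by simp [lp.single_apply, hd]]
  simp

lemma norm_tsum_mul_le_of_XRep (hα : HankelFormBounded α K)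
    {L : List ((ℕ+ → ℂ) × (ℕ+ → ℂ))} (h : XRep c L) :
    ‖∑' n, α n * c n‖ ≤ K * (L.map fun p => l2norm p.1 * l2norm p.2).sum := by
  obtain ⟨hL, rfl⟩ := h
  induction L with
  | nil => simp
  | cons p L ih =>
    obtain ⟨hp₁, hp₂⟩ := hL p List.mem_cons_self
    have hL' : ∀ q ∈ L, (support q.1).Finite ∧ (support q.2).Finite :=
      fun q hq => hL q (List.mem_cons_of_mem _ hq)
    have hs₁ : Summable fun n => α n * dConv p.1 p.2 n := summable_of_hasFiniteSupport
      ((finite_support_dConv hp₁ hp₂).subset (support_mul_subset_right _ _))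
    have hs₂ : Summable fun n => α n * (L.map fun q => dConv q.1 q.2 n).sum :=
      summable_of_hasFiniteSupport
        ((XRep.finite_support ⟨hL', rfl⟩).subset (support_mul_subset_right _ _))
    simp only [List.map_cons, List.sum_cons, mul_add]
    rw [hs₁.tsum_add hs₂]
    exact (norm_add_le _ _).trans (add_le_add (hα _ _ hp₁ hp₂) (ih hL'))

lemma norm_tsum_mul_le (hα : HankelFormBounded α K) (hK : 0 ≤ K) (hc : c ∈ XSet) :
    ‖∑' n, α n * c n‖ ≤ K * normX c := by
  obtain ⟨L, hL⟩ := hc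
  rw [normX, ← smul_eq_mul, ← Real.sInf_smul_of_nonneg hK]
  refine le_csInf (Set.Nonempty.smul_set ⟨_, L, hL, rfl⟩) ?_
  rintro _ ⟨_, ⟨L', hL', rfl⟩, rfl⟩
  exact hα.norm_tsum_mul_le_of_XRep hL'

end HankelFormBounded

namespace IsHankel

variable {T : H →L[ℂ] H} {α : ℕ+ → ℂ}

lemma coe_apply (hT : IsHankel T α) (x : H) : ⇑(T x) = hankelApply α x := by
  funext m
  have hsum := ((lp.hasSum_single (by norm_num) x).mapL T).mapL (lp.evalCLM ℂ (fun _ => ℂ) 2 m)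
  refine hsum.tsum_eq.symm.trans (tsum_congr fun d => ?_)
  rw [← mul_one (x d), ← smul_eq_mul, lp.single_smul, map_smul]
  simp [lp.evalCLM, hT d m, mul_comm]

lemma hankelFormBounded (hT : IsHankel T α) : HankelFormBounded α ‖T‖ := by
  intro a b ha hb
  have hinner : ∑' n, α n * dConv a b n = inner ℂ (toH b hb) (T (toH a ha)) := by
    rw [tsum_mul_dConv α ha.coe_toFinset.superset hb.coe_toFinset.superset, lp.inner_eq_tsum,
      tsum_eq_sum' (s := hb.toFinset) fun i hi => hb.mem_toFinset.2 fun h => hi (by simp [toH, h])]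
    simp [toH, hT.coe_apply, mul_comm]
  rw [hinner, ← norm_toH a ha, ← norm_toH b hb]
  calc _ ≤ ‖toH b hb‖ * ‖T (toH a ha)‖ := norm_inner_le_norm _ _
    _ ≤ ‖toH b hb‖ * (‖T‖ * ‖toH a ha‖) := by gcongr; exact T.le_opNorm _
    _ = _ := by ring

lemma opNorm_le (hT : IsHankel T α) {K : ℝ} (hα : HankelFormBounded α K) (hK : 0 ≤ K) :
    ‖T‖ ≤ K := by
  refine T.opNorm_le_bound hK fun x => dense_finiteSupportSubmodule.induction (fun x hx => ?_)
    (isClosed_le (by fun_prop) (by fun_prop)) x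
  rw [← l2norm_eq_norm x]
  exact hα.norm_le_of_coe_eq_hankelApply hK hx (hT.coe_apply x)

end IsHankel

lemma HankelFormBounded.of_norm_tsum_mul_le {α : ℕ+ → ℂ} {M : ℝ}
    (h : ∀ c ∈ XSet, normX c ≤ 1 → ‖∑' n, α n * c n‖ ≤ M) : HankelFormBounded α M := by
  intro a b ha hb
  rw [tsum_mul_dConv α ha.coe_toFinset.superset hb.coe_toFinset.superset]
  rcases (mul_nonneg (l2norm_nonneg a) (l2norm_nonneg b)).eq_or_lt with hab | hab
  · rw [← hab, mul_zero]
    rcases mul_eq_zero.1 hab.symm with h0 | h0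
    · obtain rfl := eq_zero_of_l2norm_eq_zero ha h0
      simp [hankelApply]
    · obtain rfl := eq_zero_of_l2norm_eq_zero hb h0
      simp
  · set s := (l2norm a * l2norm b)⁻¹
    have hs0 : ‖s‖ = s := Real.norm_of_nonneg (inv_pos.2 hab).le
    have hsa : (support ((s : ℂ) • a)).Finite := ha.subset (support_const_smul_subset _ _)
    have hs : normX (dConv ((s : ℂ) • a) b) ≤ 1 := (normX_dConv_le hsa hb).trans_eq (by
      rw [l2norm_smul, Complex.norm_real, hs0, mul_assoc, inv_mul_cancel₀ hab.ne'])
    have := h _ (dConv_mem_XSet hsa hb) hs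
    rw [tsum_mul_dConv α hsa.coe_toFinset.superset hb.coe_toFinset.superset,
      hankelApply_smul] at this
    simp only [Pi.smul_apply, smul_eq_mul, mul_left_comm _ (s : ℂ), ← Finset.mul_sum, norm_mul,
      Complex.norm_real, hs0] at this
    rw [mul_comm M]
    exact (inv_mul_le_iff₀ hab).1 this

section Functional

variable {ℓ : (ℕ+ → ℂ) → ℂ}

/-- Every `c ∈ X` is finitely supported, hence a finite combination of the unit sequences
`e_n = e_n ⋆ e_1 ∈ X`. -/
lemma eq_tsum_of_linearOn (hadd : ∀ c ∈ XSet, ∀ c' ∈ XSet, ℓ (c + c') = ℓ c + ℓ c')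
    (hsmul : ∀ (s : ℂ), ∀ c ∈ XSet, ℓ (s • c) = s * ℓ c) {c : ℕ+ → ℂ} (hc : c ∈ XSet) :
    ℓ c = ∑' n, ℓ (Pi.single n 1) * c n := by
  obtain ⟨L, hL⟩ := hc
  have hfin := hL.finite_support
  have hsum : ∀ S : Finset ℕ+, ℓ (∑ n ∈ S, Pi.single n (c n)) = ∑ n ∈ S, ℓ (Pi.single n 1) * c n ∧
      ∑ n ∈ S, Pi.single n (c n) ∈ XSet := by
    intro S
    induction S using Finset.induction_on with
    | empty => exact ⟨by simpa using hsmul 0 0 zero_mem_XSet, by simpa using zero_mem_XSet⟩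
    | insert n S hn ih =>
      rw [Finset.sum_insert hn, Finset.sum_insert hn]
      refine ⟨?_, add_mem_XSet (single_mem_XSet n _) ih.2⟩
      have hsingle : Pi.single n (c n) = c n • Pi.single n (1 : ℂ) := by
        rw [← Pi.single_smul', smul_eq_mul, mul_one]
      rw [hadd _ (single_mem_XSet n _) _ ih.2, ih.1, hsingle, hsmul _ _ (single_mem_XSet n 1),
        mul_comm]
  have hc : c = ∑ n ∈ hfin.toFinset, Pi.single n (c n) := by
    funext k
    rw [Finset.sum_apply, Finset.sum_pi_single]
    split_ifs with hk
    · rfl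
    · simpa using hk
  rw [tsum_eq_sum' ((support_mul_subset_right _ _).trans hfin.coe_toFinset.superset), ← (hsum _).1,
    ← hc]

lemma HankelFormBounded.of_linearOn (hadd : ∀ c ∈ XSet, ∀ c' ∈ XSet, ℓ (c + c') = ℓ c + ℓ c')
    (hsmul : ∀ (s : ℂ), ∀ c ∈ XSet, ℓ (s • c) = s * ℓ c) {C : ℝ}
    (hbound : ∀ c ∈ XSet, ‖ℓ c‖ ≤ C * normX c) :
    HankelFormBounded (fun n => ℓ (Pi.single n 1)) (max C 0) := by
  intro a b ha hb
  have hc := dConv_mem_XSet ha hb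
  rw [← eq_tsum_of_linearOn hadd hsmul hc]
  calc ‖ℓ (dConv a b)‖ ≤ C * normX (dConv a b) := hbound _ hc
    _ ≤ max C 0 * normX (dConv a b) :=
      mul_le_mul_of_nonneg_right (le_max_left C 0) (normX_nonneg hc)
    _ ≤ max C 0 * (l2norm a * l2norm b) :=
      mul_le_mul_of_nonneg_left (normX_dConv_le ha hb) (le_max_right C 0)

end Functional

/-- for each bounded multiplicative Hankel operator `m = M(α)` the
functional `Jm(c) = ∑_n α(n) c(n)` on `X` is bounded with `‖Jm‖_{𝒳*} = ‖M(α)‖`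
(hence extends to the completion `𝒳`), and `J : ℳ → 𝒳*` is onto: every bounded
linear functional on `X` is of this form. -/
theorem hankel_predual_duality :
    (∀ (α : ℕ+ → ℂ) (T : H →L[ℂ] H), IsHankel T α →
      (∀ c ∈ XSet, ‖∑' n : ℕ+, α n * c n‖ ≤ ‖T‖ * normX c) ∧
      ‖T‖ = sSup {x : ℝ | ∃ c ∈ XSet, normX c ≤ 1 ∧ x = ‖∑' n : ℕ+, α n * c n‖}) ∧
    (∀ (ℓ : (ℕ+ → ℂ) → ℂ) (C : ℝ),
      (∀ c ∈ XSet, ∀ c' ∈ XSet, ℓ (c + c') = ℓ c + ℓ c') →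
      (∀ (s : ℂ), ∀ c ∈ XSet, ℓ (s • c) = s * ℓ c) →
      (∀ c ∈ XSet, ‖ℓ c‖ ≤ C * normX c) →
      ∃ (α : ℕ+ → ℂ) (T : H →L[ℂ] H), IsHankel T α ∧
        ∀ c ∈ XSet, ℓ c = ∑' n : ℕ+, α n * c n) := by
  refine ⟨fun α T hT => ?_, fun ℓ C hadd hsmul hbound => ?_⟩
  · have hJ : ∀ c ∈ XSet, ‖∑' n : ℕ+, α n * c n‖ ≤ ‖T‖ * normX c :=
      fun c hc => hT.hankelFormBounded.norm_tsum_mul_le (norm_nonneg T) hc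
    set S := {x : ℝ | ∃ c ∈ XSet, normX c ≤ 1 ∧ x = ‖∑' n : ℕ+, α n * c n‖}
    have hS : ∀ x ∈ S, x ≤ ‖T‖ := by
      rintro _ ⟨c, hc, hc₁, rfl⟩
      exact (hJ c hc).trans (mul_le_of_le_one_right (norm_nonneg T) hc₁)
    have h0 : (0 : ℝ) ∈ S := ⟨0, zero_mem_XSet, (normX_le XRep_nil).trans zero_le_one, by simp⟩
    refine ⟨hJ, le_antisymm ?_ (csSup_le ⟨0, h0⟩ hS)⟩
    refine hT.opNorm_le (HankelFormBounded.of_norm_tsum_mul_le fun c hc hc₁ => ?_)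
      (le_csSup ⟨_, hS⟩ h0)
    exact le_csSup ⟨_, hS⟩ ⟨c, hc, hc₁, rfl⟩
  · obtain ⟨T, hT⟩ :=
      (HankelFormBounded.of_linearOn hadd hsmul hbound).exists_isHankel (le_max_right C 0)
    exact ⟨_, T, hT, fun c hc => eq_tsum_of_linearOn hadd hsmul hc⟩
end
end
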